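/- Let Ω ⊂ ℝ^r be compact. The Sliced 1-Wasserstein distance d_{SW_1}(P,Q) = ∫_{S^{r−1}} ∫_0^1 |F_{θ*_#P}^{[-1]}(t) − F_{θ*_#Q}^{[-1]}(t)| dt dσ(θ) is conditionally negative definite on the set of probability measures on Ω: for every n ∈ ℕ, all probability measures P_1, …, P_n on Ω and all real coefficients a_1, …, a_n with Σᵢ aᵢ = 0, one has Σ_{i,j=1}^n aᵢ aⱼ d_{SW_1}(P_i, P_j) ≤ 0. -/

import Mathlib

open MeasureTheory
open scoped RealInnerProductSpace

/-- The generalized inverse cumulative distribution function (quantile function) of a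
probability measure `μ` on `ℝ`: `F_μ^{[-1]}(t) = inf {x : F_μ(x) ≥ t}` where
`F_μ(x) = μ((−∞, x])`. -/
noncomputable def invCDF (μ : Measure ℝ) (t : ℝ) : ℝ :=
  sInf {x : ℝ | t ≤ (μ (Set.Iic x)).toReal}

/-- The uniform probability measure on the unit sphere `S^{r-1} ⊂ ℝ^r`
(the normalized surface measure). -/
noncomputable def uniformSphere (r : ℕ) :
    Measure (Metric.sphere (0 : EuclideanSpace ℝ (Fin r)) 1) :=
  ((volume : Measure (EuclideanSpace ℝ (Fin r))).toSphere Set.univ)⁻¹ •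
    (volume : Measure (EuclideanSpace ℝ (Fin r))).toSphere

/-- The Sliced 1-Wasserstein distance between probability measures on `ℝ^r`:
`d_{SW₁}(P,Q) = ∫_{S^{r−1}} ∫_0^1 |F_{θ*_#P}^{[-1]}(t) − F_{θ*_#Q}^{[-1]}(t)| dt dσ(θ)`. -/
noncomputable def slicedW1 {r : ℕ} (P Q : Measure (EuclideanSpace ℝ (Fin r))) : ℝ :=
  ∫ θ : Metric.sphere (0 : EuclideanSpace ℝ (Fin r)) 1,
    (∫ t in Set.Ioc (0 : ℝ) 1,
      |invCDF (P.map fun x => ⟪x, (θ : EuclideanSpace ℝ (Fin r))⟫) t -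
        invCDF (Q.map fun x => ⟪x, (θ : EuclideanSpace ℝ (Fin r))⟫) t|) ∂(uniformSphere r)

/-!
For fixed `θ` and `t`, the integrand of `slicedW1` is the distance `|x - y|` on `ℝ` evaluated at
two quantiles, and `|x - y| = x + y - 2 min x y` is conditionally negative definite because
`min x y - m = ∫ 𝟙_(m, x] 𝟙_(m, y]` is a Gram kernel for `x, y ≥ m`. Averaging over `(θ, t)`
preserves this. Since the `P i` live on a compact set, all quantile functions are bounded, and the
Galois connection `F⁻¹(t) ≤ y ↔ t ≤ F(y)` makes them jointly measurable in `(θ, t)`, so the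
average is a genuine integral over the product measure and Fubini applies.
-/

open Set Metric ProbabilityTheory

section CondNegDef

variable {ι : Type*} [Fintype ι] (a : ι → ℝ)

theorem sum_sum_mul_mul_add_eq_zero (ha : ∑ i, a i = 0) (g : ι → ℝ) :
    ∑ i, ∑ j, a i * a j * (g i + g j) = 0 := by
  calc ∑ i, ∑ j, a i * a j * (g i + g j)
      = (∑ i, a i * g i) * ∑ j, a j + (∑ i, a i) * ∑ j, a j * g j := by
        simp only [Finset.sum_mul_sum, ← Finset.sum_add_distrib]
        exact Finset.sum_congr rfl fun i _ => Finset.sum_congr rfl fun j _ => by ring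
    _ = 0 := by simp [ha]

theorem integral_sum_sum_mul {X : Type*} [MeasurableSpace X] {μ : Measure X}
    {f : ι → ι → X → ℝ} (hf : ∀ i j, Integrable (f i j) μ) :
    ∫ x, ∑ i, ∑ j, a i * a j * f i j x ∂μ = ∑ i, ∑ j, a i * a j * ∫ x, f i j x ∂μ := by
  rw [integral_finsetSum _ fun i _ => integrable_finsetSum _ fun j _ => (hf i j).const_mul _]
  refine Finset.sum_congr rfl fun i _ => ?_
  rw [integral_finsetSum _ fun j _ => (hf i j).const_mul _]
  simp_rw [integral_const_mul]

theorem sum_sum_mul_integral_nonpos {X : Type*} [MeasurableSpace X] {μ : Measure X}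
    {f : ι → ι → X → ℝ} (hf : ∀ i j, Integrable (f i j) μ)
    (h : ∀ x, ∑ i, ∑ j, a i * a j * f i j x ≤ 0) :
    ∑ i, ∑ j, a i * a j * ∫ x, f i j x ∂μ ≤ 0 := by
  rw [← integral_sum_sum_mul a hf]
  exact integral_nonpos h

theorem sum_sum_mul_min_sub_nonneg {s : ι → ℝ} {m : ℝ} (hm : ∀ i, m ≤ s i) :
    0 ≤ ∑ i, ∑ j, a i * a j * (min (s i) (s j) - m) := by
  set φ : ι → ℝ → ℝ := fun i => (Ioc m (s i)).indicator 1
  have hφφ : ∀ i j, (fun u => φ i u * φ j u) = (Ioc m (min (s i) (s j))).indicator 1 := by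
    intro i j
    funext u
    rw [← max_self m, ← Ioc_inter_Ioc, inter_indicator_one]
    rfl
  have hint : ∀ i j, Integrable (fun u => φ i u * φ j u) := by
    intro i j
    rw [hφφ]
    exact (integrableOn_const measure_Ioc_lt_top.ne).integrable_indicator measurableSet_Ioc
  calc 0 ≤ ∫ u, (∑ i, a i * φ i u) ^ 2 := integral_nonneg fun u => sq_nonneg _
    _ = ∫ u, ∑ i, ∑ j, a i * a j * (φ i u * φ j u) := by
      simp_rw [sq, Finset.sum_mul_sum, mul_mul_mul_comm]
    _ = _ := by
      rw [integral_sum_sum_mul a hint]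
      simp_rw [hφφ, integral_indicator_one measurableSet_Ioc,
        Real.volume_real_Ioc_of_le (le_min (hm _) (hm _))]

theorem sum_sum_mul_abs_sub_nonpos (ha : ∑ i, a i = 0) (s : ι → ℝ) :
    ∑ i, ∑ j, a i * a j * |s i - s j| ≤ 0 := by
  obtain ⟨m, hm⟩ := (finite_range s).bddBelow
  have habs : ∀ i j,
      |s i - s j| = ((s i - m) + (s j - m)) - 2 * (min (s i) (s j) - m) := by
    intro i j
    rw [abs_sub_comm, ← max_sub_min_eq_abs]
    linarith [min_add_max (s i) (s j)]
  have hsplit : ∑ i, ∑ j, a i * a j * |s i - s j| = ∑ i, ∑ j, a i * a j * ((s i - m) + (s j - m))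
      - 2 * ∑ i, ∑ j, a i * a j * (min (s i) (s j) - m) := by
    simp only [habs, Finset.mul_sum, ← Finset.sum_sub_distrib]
    exact Finset.sum_congr rfl fun i _ => Finset.sum_congr rfl fun j _ => by ring
  rw [hsplit, sum_sum_mul_mul_add_eq_zero a ha]
  linarith [sum_sum_mul_min_sub_nonneg a fun i => hm (mem_range_self i)]

end CondNegDef

section Quantile

variable {μ : Measure ℝ} {t : ℝ}

theorem bddBelow_setOf_le_cdf (ht : 0 < t) : BddBelow {x | t ≤ cdf μ x} := by
  obtain ⟨b, hb⟩ := Filter.eventually_atBot.1 ((tendsto_cdf_atBot μ).eventually (gt_mem_nhds ht))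
  refine ⟨b, fun x hx => ?_⟩
  by_contra! hbx
  exact (hb x hbx.le).not_ge hx

variable [IsProbabilityMeasure μ]

theorem invCDF_eq_sInf_cdf : invCDF μ t = sInf {x | t ≤ cdf μ x} := by
  simp only [invCDF, cdf_eq_real]
  rfl

theorem le_cdf_invCDF (ht : 0 < t) (hne : ∃ z, t ≤ cdf μ z) : t ≤ cdf μ (invCDF μ t) := by
  rw [invCDF_eq_sInf_cdf]
  refine ge_of_tendsto (((cdf μ).right_continuous _).mono Ioi_subset_Ici_self) ?_
  filter_upwards [self_mem_nhdsWithin] with y hy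
  obtain ⟨x, hx, hxy⟩ := (csInf_lt_iff (bddBelow_setOf_le_cdf ht) hne).1 hy
  exact hx.trans (monotone_cdf μ hxy.le)

theorem invCDF_le_iff (ht : 0 < t) (hne : ∃ z, t ≤ cdf μ z) {y : ℝ} :
    invCDF μ t ≤ y ↔ t ≤ cdf μ y := by
  refine ⟨fun h => (le_cdf_invCDF ht hne).trans (monotone_cdf μ h), fun h => ?_⟩
  rw [invCDF_eq_sInf_cdf]
  exact csInf_le (bddBelow_setOf_le_cdf ht) h

theorem cdf_eq_one_of_measure_Icc_eq_one {a b : ℝ} (h : μ (Icc a b) = 1) : cdf μ b = 1 := by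
  rw [cdf_eq_real, measureReal_def,
    le_antisymm prob_le_one (h ▸ measure_mono Icc_subset_Iic_self), ENNReal.toReal_one]

theorem invCDF_mem_Icc {a b : ℝ} (h : μ (Icc a b) = 1) (ht : t ∈ Ioc 0 1) :
    invCDF μ t ∈ Icc a b := by
  have hb := cdf_eq_one_of_measure_Icc_eq_one h
  have hne : ∃ z, t ≤ cdf μ z := ⟨b, hb ▸ ht.2⟩
  refine ⟨?_, (invCDF_le_iff ht.1 hne).2 (hb ▸ ht.2)⟩
  by_contra! hlt
  obtain ⟨y, hy, hya⟩ := exists_between hlt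
  have hy0 : cdf μ y = 0 := by
    rw [cdf_eq_real, measureReal_def, measure_mono_null (fun x hx hx' => ?_)
      ((prob_compl_eq_zero_iff measurableSet_Icc).2 h), ENNReal.toReal_zero]
    exact (hya.trans_le hx'.1).not_ge hx
  linarith [ht.1, (invCDF_le_iff ht.1 hne).1 hy.le]

theorem measurable_indicator_invCDF {X : Type*} [MeasurableSpace X] {ν : X → Measure ℝ}
    [∀ x, IsProbabilityMeasure (ν x)] (hν : ∀ y, Measurable fun x => cdf (ν x) y)
    (hsupp : ∀ x, ∃ z, cdf (ν x) z = 1) :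
    Measurable fun p : X × ℝ => (Ioc 0 1).indicator (invCDF (ν p.1)) p.2 := by
  refine measurable_of_Iic fun y => ?_
  have hpre : (fun p : X × ℝ => (Ioc 0 1).indicator (invCDF (ν p.1)) p.2) ⁻¹' Iic y =
      (Prod.snd ⁻¹' Ioc 0 1 ∩ {p | p.2 ≤ cdf (ν p.1) y}) ∪
        ((Prod.snd ⁻¹' Ioc 0 1)ᶜ ∩ {_p | 0 ≤ y}) := by
    ext ⟨x, t⟩
    by_cases ht : t ∈ Ioc 0 1
    · obtain ⟨z, hz⟩ := hsupp x
      simp [ht, invCDF_le_iff ht.1 ⟨z, hz ▸ ht.2⟩]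
    · simp [ht]
  rw [hpre]
  exact ((measurable_snd measurableSet_Ioc).inter
    (measurableSet_le measurable_snd ((hν y).comp measurable_fst))).union
    ((measurable_snd measurableSet_Ioc).compl.inter (MeasurableSet.const _))

end Quantile

section Projection

variable {E : Type*} [NormedAddCommGroup E] [InnerProductSpace ℝ E] [MeasurableSpace E]
  [BorelSpace E] (P : Measure E)

instance isProbabilityMeasure_map_inner [IsProbabilityMeasure P] (θ : E) :
    IsProbabilityMeasure (P.map (⟪·, θ⟫)) :=
  Measure.isProbabilityMeasure_map (continuous_id'.inner continuous_const).measurable.aemeasurable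

theorem map_inner_Icc_eq_one [IsProbabilityMeasure P] {R : ℝ} (hP : P (closedBall 0 R) = 1)
    {θ : E} (hθ : ‖θ‖ ≤ 1) : P.map (⟪·, θ⟫) (Icc (-R) R) = 1 := by
  have hmeas : Measurable (⟪·, θ⟫ : E → ℝ) := (continuous_id'.inner continuous_const).measurable
  refine le_antisymm prob_le_one ?_
  rw [Measure.map_apply hmeas measurableSet_Icc, ← hP]
  refine measure_mono fun x hx => abs_le.1 ?_
  have hxR : ‖x‖ ≤ R := mem_closedBall_zero_iff.1 hx
  calc |⟪x, θ⟫| ≤ ‖x‖ * ‖θ‖ := abs_real_inner_le_norm x θ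
    _ ≤ R * 1 := mul_le_mul hxR hθ (norm_nonneg θ) ((norm_nonneg x).trans hxR)
    _ = R := mul_one R

theorem measurable_map_inner_apply [SecondCountableTopology E] [SFinite P] {s : Set ℝ}
    (hs : MeasurableSet s) : Measurable fun θ : E => P.map (⟪·, θ⟫) s := by
  have hprod : MeasurableSet {p : E × E | ⟪p.2, p.1⟫ ∈ s} :=
    (continuous_snd.inner continuous_fst).measurable hs
  convert measurable_measure_prodMk_left (ν := P) hprod using 2 with θ
  rw [Measure.map_apply (continuous_id'.inner continuous_const).measurable hs]
  rfl

end Projection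

section Sliced

variable {E : Type*} [NormedAddCommGroup E] [InnerProductSpace ℝ E] [MeasurableSpace E]
  [BorelSpace E] {P Q : Measure E} [IsProbabilityMeasure P] [IsProbabilityMeasure Q] {R : ℝ}

/-- The quantile function of `θ*_#P` at `t`, extended by `0` outside `(0, 1]` so that it is
measurable on the whole product `S^{r-1} × ℝ`. -/
noncomputable def slicedQuantile (P : Measure E) (p : sphere (0 : E) 1 × ℝ) : ℝ :=
  (Ioc 0 1).indicator (invCDF (P.map (⟪·, (p.1 : E)⟫))) p.2

theorem abs_slicedQuantile_le (hP : P (closedBall 0 R) = 1) (p : sphere (0 : E) 1 × ℝ) :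
    |slicedQuantile P p| ≤ R := by
  by_cases ht : p.2 ∈ Ioc 0 1
  · rw [slicedQuantile, indicator_of_mem ht]
    exact abs_le.2 (invCDF_mem_Icc (map_inner_Icc_eq_one P hP (norm_eq_of_mem_sphere p.1).le) ht)
  · obtain ⟨x, hx⟩ := nonempty_of_measure_ne_zero (hP ▸ one_ne_zero : P (closedBall 0 R) ≠ 0)
    rw [slicedQuantile, indicator_of_notMem ht, abs_zero]
    exact nonempty_closedBall.1 ⟨x, hx⟩

theorem measurable_slicedQuantile [SecondCountableTopology E] (hP : P (closedBall 0 R) = 1) :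
    Measurable (slicedQuantile P) := by
  have hcdf (y : ℝ) : Measurable fun θ : sphere (0 : E) 1 => cdf (P.map (⟪·, (θ : E)⟫)) y := by
    simp_rw [cdf_eq_real, measureReal_def]
    exact ((measurable_map_inner_apply P measurableSet_Iic).comp
      measurable_subtype_coe).ennreal_toReal
  exact (measurable_indicator_invCDF hcdf fun θ => ⟨R, cdf_eq_one_of_measure_Icc_eq_one
    (map_inner_Icc_eq_one P hP (norm_eq_of_mem_sphere θ).le)⟩ :)

theorem integrable_abs_sub_slicedQuantile [SecondCountableTopology E]
    (hP : P (closedBall 0 R) = 1) (hQ : Q (closedBall 0 R) = 1)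
    (μ : Measure (sphere (0 : E) 1 × ℝ)) [IsFiniteMeasure μ] :
    Integrable (fun p => |slicedQuantile P p - slicedQuantile Q p|) μ := by
  refine Integrable.of_bound ((measurable_slicedQuantile hP).sub
    (measurable_slicedQuantile hQ)).abs.aestronglyMeasurable (R + R) (ae_of_all _ fun p => ?_)
  rw [Real.norm_eq_abs, abs_abs]
  exact (abs_sub _ _).trans (add_le_add (abs_slicedQuantile_le hP p) (abs_slicedQuantile_le hQ p))

end Sliced

instance isFiniteMeasure_uniformSphere (r : ℕ) : IsFiniteMeasure (uniformSphere r) := by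
  unfold uniformSphere
  infer_instance

theorem slicedW1_eq_integral_prod {r : ℕ} {P Q : Measure (EuclideanSpace ℝ (Fin r))}
    [IsProbabilityMeasure P] [IsProbabilityMeasure Q] {R : ℝ}
    (hP : P (closedBall 0 R) = 1) (hQ : Q (closedBall 0 R) = 1) :
    slicedW1 P Q = ∫ p, |slicedQuantile P p - slicedQuantile Q p|
      ∂(uniformSphere r).prod (volume.restrict (Ioc 0 1)) := by
  rw [integral_prod _ (integrable_abs_sub_slicedQuantile hP hQ _)]
  refine integral_congr_ae (ae_of_all _ fun θ => setIntegral_congr_fun measurableSet_Ioc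
    fun t ht => ?_)
  simp only [slicedQuantile, indicator_of_mem ht]

/-- **The Sliced 1-Wasserstein distance is conditionally negative definite.**
Let `Ω ⊂ ℝ^r` be compact.  For every `n`, all probability measures `P₁, …, Pₙ` on `Ω` and all
real coefficients `a₁, …, aₙ` with `∑ᵢ aᵢ = 0`, one has `∑_{i,j} aᵢ aⱼ d_{SW₁}(Pᵢ, Pⱼ) ≤ 0`. -/
theorem slicedW1_cnd {r : ℕ} (Ω : Set (EuclideanSpace ℝ (Fin r))) (hΩ : IsCompact Ω) :
    ∀ (n : ℕ) (P : Fin n → Measure (EuclideanSpace ℝ (Fin r))),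
      (∀ i, IsProbabilityMeasure (P i)) → (∀ i, P i Ω = 1) →
      ∀ a : Fin n → ℝ, (∑ i, a i) = 0 →
        (∑ i, ∑ j, a i * a j * slicedW1 (P i) (P j)) ≤ 0 := by
  intro n P hP hPΩ a ha
  obtain ⟨R, hΩR⟩ := hΩ.isBounded.subset_closedBall 0
  have hPR : ∀ i, P i (closedBall 0 R) = 1 :=
    fun i => le_antisymm prob_le_one (hPΩ i ▸ measure_mono hΩR)
  simp_rw [slicedW1_eq_integral_prod (hPR _) (hPR _)]
  exact sum_sum_mul_integral_nonpos a
    (fun i j => integrable_abs_sub_slicedQuantile (hPR i) (hPR j) _)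
    fun p => sum_sum_mul_abs_sub_nonpos a ha _
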